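/- arXiv:2111.04863 — 4 statements merged into one kernel-verified Lean document; each statement's English description precedes it below -/
import Mathlib

section
/- Let H be a real Banach space, let P : ℝ → (H →L[ℝ] H) be differentiable with P(s) ∘ P(s) = P(s) for every s, let f : H → H be any map, and let u : ℝ → H be differentiable with u'(s) = P(s)(f(u(s))) + P'(s)(u(s)) for every s. Then the residual v(s) := u(s) − P(s)(u(s)) satisfies the linear differential equation v'(t) = −P'(t)(v(t)) at every t. -/
/-- Let `P : ℝ → (H →L[ℝ] H)` be a differentiable projector-valued path on a real Banach
space `H`, `f : H → H` any map, and let `u` be a differentiable solution of the dynamical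
Galerkin scheme `u'(s) = P s (f (u s)) + P' s (u s)`. Then the residual
`v s := u s - P s (u s)` satisfies `v'(t) = - P' t (v t)` at every `t`. -/
theorem stmt_4 {H : Type*} [NormedAddCommGroup H] [NormedSpace ℝ H] [CompleteSpace H]
    (P P' : ℝ → H →L[ℝ] H) (hP : ∀ s, HasDerivAt P (P' s) s)
    (hproj : ∀ s, (P s).comp (P s) = P s)
    (f : H → H) (u : ℝ → H)
    (hu : ∀ s, HasDerivAt u (P s (f (u s)) + P' s (u s)) s) :
    ∀ t, HasDerivAt (fun s => u s - P s (u s)) (-(P' t (u t - P t (u t)))) t := by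
  intro t
  -- derivative of the projector identity P ∘ P = P
  have hsq : HasDerivAt (fun s => P s * P s) (P' t * P t + P t * P' t) t :=
    (hP t).mul (hP t)
  have heq : (fun s => P s * P s) = P := funext fun s => hproj s
  rw [heq] at hsq
  have hleib : P' t * P t + P t * P' t = P' t := hsq.unique (hP t)
  have hPu := (hP t).clm_apply (hu t)
  have h := (hu t).sub hPu
  convert h using 1
  · rfl
  have key : P t (P' t (u t)) = P' t (u t) - P' t (P t (u t)) := by
    have := congrArg (fun (A : H →L[ℝ] H) => A (u t)) hleib
    simp only [ContinuousLinearMap.add_apply, ContinuousLinearMap.mul_apply] at this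
    exact eq_sub_of_add_eq' this
  have hPP : ∀ x, P t (P t x) = P t x := fun x =>
    DFunLike.congr_fun (hproj t) x
  simp only [map_sub, map_add, hPP, key]
  abel
end

section
/- Let H be a real Banach space, let T > 0, let P : [0,T] → (H →L[ℝ] H) be differentiable with P(s) ∘ P(s) = P(s) for every s ∈ [0,T] and with ‖P'(s)‖ ≤ K for all s ∈ [0,T] for some constant K ≥ 0. Let f : H → H be any map and let u : [0,T] → H be differentiable with u'(s) = P(s)(f(u(s))) + P'(s)(u(s)) for every s ∈ [0,T]. If P(0)(u(0)) = u(0), then P(t)(u(t)) = u(t) for every t ∈ [0,T]. -/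
/-- Invariance of the moving approximation space: let `P : [0,T] → (H →L[ℝ] H)` be a
differentiable projector-valued path on a real Banach space `H`, with derivative bounded
by `K`, let `f : H → H` be any map, and let `u : [0,T] → H` be a differentiable solution
of the dynamical Galerkin scheme `u'(s) = P s (f (u s)) + P' s (u s)`. If
`P 0 (u 0) = u 0`, then `P t (u t) = u t` for all `t ∈ [0,T]`. -/
theorem stmt_5 {H : Type*} [NormedAddCommGroup H] [NormedSpace ℝ H] [CompleteSpace H]
    (T : ℝ) (hT : 0 < T)
    (P P' : ℝ → H →L[ℝ] H)
    (hP : ∀ s ∈ Set.Icc (0 : ℝ) T, HasDerivWithinAt P (P' s) (Set.Icc (0 : ℝ) T) s)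
    (hproj : ∀ s ∈ Set.Icc (0 : ℝ) T, (P s).comp (P s) = P s)
    (K : ℝ) (hK : 0 ≤ K) (hbound : ∀ s ∈ Set.Icc (0 : ℝ) T, ‖P' s‖ ≤ K)
    (f : H → H) (u : ℝ → H)
    (hu : ∀ s ∈ Set.Icc (0 : ℝ) T,
      HasDerivWithinAt u (P s (f (u s)) + P' s (u s)) (Set.Icc (0 : ℝ) T) s)
    (h0 : P 0 (u 0) = u 0) :
    ∀ t ∈ Set.Icc (0 : ℝ) T, P t (u t) = u t := by
  set w : ℝ → H := fun s => P s (u s) - u s with hwdef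
  have hUD : UniqueDiffOn ℝ (Set.Icc (0 : ℝ) T) := uniqueDiffOn_Icc hT
  -- differentiate P ∘ P = P to get P' = P' P + P P'
  have hPP' : ∀ s ∈ Set.Icc (0 : ℝ) T,
      (P' s).comp (P s) + (P s).comp (P' s) = P' s := by
    intro s hs
    have h1 : HasDerivWithinAt (fun t => (P t).comp (P t))
        ((P' s).comp (P s) + (P s).comp (P' s)) (Set.Icc (0 : ℝ) T) s :=
      (hP s hs).clm_comp (hP s hs)
    have h2 : HasDerivWithinAt (fun t => (P t).comp (P t)) (P' s)
        (Set.Icc (0 : ℝ) T) s :=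
      (hP s hs).congr (fun x hx => hproj x hx) (hproj s hs)
    have e1 := h1.derivWithin (hUD s hs)
    rw [h2.derivWithin (hUD s hs)] at e1
    exact e1.symm
  have hw' : ∀ s ∈ Set.Icc (0 : ℝ) T,
      HasDerivWithinAt w (-(P' s (w s))) (Set.Icc (0 : ℝ) T) s := by
    intro s hs
    have hPu : HasDerivWithinAt (fun t => P t (u t))
        (P' s (u s) + P s (P s (f (u s)) + P' s (u s))) (Set.Icc (0 : ℝ) T) s :=
      (hP s hs).clm_apply (hu s hs)
    have hder := hPu.sub (hu s hs)
    have hPid : P s (P s (f (u s))) = P s (f (u s)) := by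
      have := congrArg (fun L : H →L[ℝ] H => L (f (u s))) (hproj s hs)
      simpa using this
    have hrel : P s (P' s (u s)) = P' s (u s) - P' s (P s (u s)) := by
      have := congrArg (fun L : H →L[ℝ] H => L (u s)) (hPP' s hs)
      simp only [ContinuousLinearMap.add_apply, ContinuousLinearMap.comp_apply] at this
      exact eq_sub_of_add_eq' this
    convert hder using 1
    · rfl
    simp only [hwdef, map_sub, map_add, hPid, hrel]
    abel
  have hcont : ContinuousOn w (Set.Icc (0 : ℝ) T) :=
    fun s hs => (hw' s hs).continuousWithinAt
  have key : ∀ t ∈ Set.Icc (0 : ℝ) T, ‖w t‖ ≤ gronwallBound 0 K 0 (t - 0) := by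
    apply norm_le_gronwallBound_of_norm_deriv_right_le hcont
    · intro x hx
      exact (hw' x (Set.Ico_subset_Icc_self hx)).mono_of_mem_nhdsWithin
        (Icc_mem_nhdsGE_of_mem hx)
    · simp [hwdef, h0]
    · intro x hx
      have hx' := Set.Ico_subset_Icc_self hx
      calc ‖-(P' x (w x))‖ = ‖P' x (w x)‖ := norm_neg _
        _ ≤ ‖P' x‖ * ‖w x‖ := (P' x).le_opNorm _
        _ ≤ K * ‖w x‖ := mul_le_mul_of_nonneg_right (hbound x hx') (norm_nonneg _)
        _ ≤ K * ‖w x‖ + 0 := by simp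
  intro t ht
  have := key t ht
  rw [gronwallBound_ε0] at this
  simp only [zero_mul] at this
  have hz : w t = 0 := norm_le_zero_iff.mp this
  exact sub_eq_zero.mp hz
end

section
/- Let H be a real inner product space, let T > 0, and let P : [0,T] → (H →L[ℝ] H) be differentiable such that for every s ∈ [0,T], P(s) ∘ P(s) = P(s), P(s) is self-adjoint (⟪P(s)x, y⟫ = ⟪x, P(s)y⟫ for all x, y ∈ H), and ‖P'(s)‖ ≤ K for some constant K ≥ 0. Let f : H → H be any map and let u : [0,T] → H be differentiable with u'(s) = P(s)(f(u(s))) + P'(s)(u(s)) for every s ∈ [0,T] and P(0)(u(0)) = u(0). Then for every t ∈ [0,T], the function s ↦ (1/2)‖u(s)‖² has derivative ⟪u(t), f(u(t))⟫ at t; that is, (1/2) d/dt ‖u(t)‖² = ⟪u(t), f(u(t))⟫. -/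
open scoped RealInnerProductSpace

/-- Energy equation for the dynamical Galerkin scheme with a smooth projector: let
`P : [0,T] → (H →L[ℝ] H)` be a differentiable path of self-adjoint projectors on a real
inner product space `H`, with derivative bounded by `K`, let `f : H → H` be any map, and
let `u : [0,T] → H` be a differentiable solution of
`u'(s) = P s (f (u s)) + P' s (u s)` with `P 0 (u 0) = u 0`. Then for every `t ∈ [0,T]`,
`(1/2) d/dt ‖u t‖² = ⟪u t, f (u t)⟫`. -/
theorem stmt_6 {H : Type*} [NormedAddCommGroup H] [InnerProductSpace ℝ H]
    (T : ℝ) (hT : 0 < T)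
    (P P' : ℝ → H →L[ℝ] H)
    (hP : ∀ s ∈ Set.Icc (0 : ℝ) T, HasDerivWithinAt P (P' s) (Set.Icc (0 : ℝ) T) s)
    (hproj : ∀ s ∈ Set.Icc (0 : ℝ) T, (P s).comp (P s) = P s)
    (hsa : ∀ s ∈ Set.Icc (0 : ℝ) T, ∀ x y : H, ⟪P s x, y⟫ = ⟪x, P s y⟫)
    (K : ℝ) (hK : 0 ≤ K) (hbound : ∀ s ∈ Set.Icc (0 : ℝ) T, ‖P' s‖ ≤ K)
    (f : H → H) (u : ℝ → H)
    (hu : ∀ s ∈ Set.Icc (0 : ℝ) T,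
      HasDerivWithinAt u (P s (f (u s)) + P' s (u s)) (Set.Icc (0 : ℝ) T) s)
    (h0 : P 0 (u 0) = u 0) :
    ∀ t ∈ Set.Icc (0 : ℝ) T,
      HasDerivWithinAt (fun s => (1 / 2 : ℝ) * ‖u s‖ ^ 2) ⟪u t, f (u t)⟫
        (Set.Icc (0 : ℝ) T) t := by
  have hud : UniqueDiffOn ℝ (Set.Icc (0 : ℝ) T) := uniqueDiffOn_Icc hT
  -- Leibniz identity for the projector: P' = P' ∘ P + P ∘ P'
  have hid : ∀ s ∈ Set.Icc (0 : ℝ) T,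
      (P' s).comp (P s) + (P s).comp (P' s) = P' s := by
    intro s hs
    have h1 : HasDerivWithinAt (fun y => (P y).comp (P y))
        ((P' s).comp (P s) + (P s).comp (P' s)) (Set.Icc (0 : ℝ) T) s :=
      (hP s hs).clm_comp (hP s hs)
    have h2 : HasDerivWithinAt (fun y => (P y).comp (P y)) (P' s)
        (Set.Icc (0 : ℝ) T) s :=
      (hP s hs).congr (fun y hy => hproj y hy) (hproj s hs)
    have e1 := h1.derivWithin (hud s hs)
    have e2 := h2.derivWithin (hud s hs)
    rw [e2] at e1
    exact e1.symm
  -- w := u - P u satisfies w' = -P' w, w 0 = 0, hence w ≡ 0 by Gronwall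
  set w : ℝ → H := fun s => u s - P s (u s) with hw
  have hw' : ∀ s ∈ Set.Icc (0 : ℝ) T,
      HasDerivWithinAt w (-(P' s (w s))) (Set.Icc (0 : ℝ) T) s := by
    intro s hs
    have h1 : HasDerivWithinAt w
        ((P s (f (u s)) + P' s (u s)) -
          (P' s (u s) + P s (P s (f (u s)) + P' s (u s))))
        (Set.Icc (0 : ℝ) T) s :=
      (hu s hs).sub ((hP s hs).clm_apply (hu s hs))
    convert h1 using 1
    have hPP : ∀ x : H, P s (P s x) = P s x := by
      intro x
      have := congrArg (fun A : H →L[ℝ] H => A x) (hproj s hs)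
      simpa using this
    have hidu := congrArg (fun A : H →L[ℝ] H => A (u s)) (hid s hs)
    simp only [ContinuousLinearMap.add_apply, ContinuousLinearMap.comp_apply] at hidu
    have hPc : P s (P' s (u s)) = P' s (u s) - P' s (P s (u s)) := by
      exact eq_sub_of_add_eq' hidu
    simp only [hw, map_add, hPP, hPc, map_sub]
    abel
  have hwc : ContinuousOn w (Set.Icc (0 : ℝ) T) :=
    fun s hs => (hw' s hs).continuousWithinAt
  have hw0 : w 0 = 0 := by simp [hw, h0]
  have hwz : ∀ s ∈ Set.Icc (0 : ℝ) T, w s = 0 := by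
    intro s hs
    have := norm_le_gronwallBound_of_norm_deriv_right_le hwc
      (fun x hx => by
        have hmem : Set.Icc (0 : ℝ) T ∈ nhdsWithin x (Set.Ici x) :=
          Filter.mem_of_superset (Icc_mem_nhdsGE_of_mem ⟨le_refl x, hx.2⟩)
            (Set.Icc_subset_Icc_left hx.1)
        exact (hw' x ⟨hx.1, hx.2.le⟩).mono_of_mem_nhdsWithin hmem)
      (show ‖w 0‖ ≤ 0 by simp [hw0]) (K := K) (ε := 0)
      (fun x hx => by
        have h1 : ‖P' x (w x)‖ ≤ ‖P' x‖ * ‖w x‖ := (P' x).le_opNorm _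
        have h2 : ‖P' x‖ * ‖w x‖ ≤ K * ‖w x‖ :=
          mul_le_mul_of_nonneg_right (hbound x ⟨hx.1, hx.2.le⟩) (norm_nonneg _)
        simpa using h1.trans h2) s hs
    rw [gronwallBound_ε0_δ0] at this
    simpa using norm_le_zero_iff.mp this
  have hPu : ∀ s ∈ Set.Icc (0 : ℝ) T, P s (u s) = u s := by
    intro s hs
    have := hwz s hs
    simp only [hw, sub_eq_zero] at this
    exact this.symm
  intro t ht
  -- derivative of the squared norm
  have h1 : HasDerivWithinAt (fun s => ⟪u s, u s⟫)
      (⟪u t, P t (f (u t)) + P' t (u t)⟫ + ⟪P t (f (u t)) + P' t (u t), u t⟫)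
      (Set.Icc (0 : ℝ) T) t := (hu t ht).inner ℝ (hu t ht)
  have h2 : HasDerivWithinAt (fun s => (1 / 2 : ℝ) * ‖u s‖ ^ 2)
      ((1 / 2 : ℝ) * (⟪u t, P t (f (u t)) + P' t (u t)⟫ +
        ⟪P t (f (u t)) + P' t (u t), u t⟫)) (Set.Icc (0 : ℝ) T) t := by
    have := h1.const_mul (1 / 2 : ℝ)
    refine this.congr (fun y _ => ?_) ?_ <;>
      rw [real_inner_self_eq_norm_sq]
  convert h2 using 1
  -- compute the value of the derivative
  have hzero : ⟪u t, P' t (u t)⟫ = 0 := by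
    have hidu := congrArg (fun A : H →L[ℝ] H => A (u t)) (hid t ht)
    simp only [ContinuousLinearMap.add_apply, ContinuousLinearMap.comp_apply] at hidu
    have e1 : ⟪u t, P' t (P t (u t))⟫ = ⟪u t, P' t (u t)⟫ := by rw [hPu t ht]
    have e2 : ⟪u t, P t (P' t (u t))⟫ = ⟪u t, P' t (u t)⟫ := by
      rw [← hsa t ht, hPu t ht]
    have e3 : ⟪u t, P' t (P t (u t)) + P t (P' t (u t))⟫ = ⟪u t, P' t (u t)⟫ := by
      rw [hidu]
    rw [inner_add_right, e1, e2] at e3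
    linarith
  have hPf : ⟪u t, P t (f (u t))⟫ = ⟪u t, f (u t)⟫ := by
    rw [← hsa t ht, hPu t ht]
  have e1 : ⟪u t, P t (f (u t)) + P' t (u t)⟫ = ⟪u t, f (u t)⟫ := by
    rw [inner_add_right, hPf, hzero, add_zero]
  have e2 : ⟪P t (f (u t)) + P' t (u t), u t⟫ = ⟪u t, f (u t)⟫ := by
    rw [real_inner_comm]; exact e1
  rw [e1, e2]; ring
end

section
/- Let H be a real inner product space, T > 0, and let 0 = t₀ < t₁ < ⋯ < t_m < t_{m+1} = T be a partition. Let f : H → H be a map and let P : [0,T] → (H →L[ℝ] H) be such that for every s ∈ [0,T], P(s) ∘ P(s) = P(s) and P(s) is self-adjoint. Let u : [0,T] → H satisfy: (a) on each open interval (t_i, t_{i+1}), P and u are differentiable, u'(s) = P(s)(f(u(s))) + P'(s)(u(s)), and P(s)(u(s)) = u(s); (b) u is right-continuous and continuous at t₀ = 0 and at T; (c) at each interior node t_i (1 ≤ i ≤ m) the left limit uᵢ⁻ := lim_{s↑t_i} u(s) exists and u(t_i) = lim_{s↓t_i} u(s) = P(t_i⁺)(uᵢ⁻), where P(t_i⁺)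 := lim_{s↓t_i} P(s) exists; (d) the function s ↦ ⟪u(s), f(u(s))⟫ is integrable on [0,T]. Then (1/2)(‖u(T)‖² − ‖u(0)‖²) = ∫₀ᵀ ⟪u(τ), f(u(τ))⟫ dτ − (1/2) Σ_{i=1}^{m} ‖uᵢ⁻ − P(t_i⁺)(uᵢ⁻)‖². -/
open scoped RealInnerProductSpace
open Filter Topology

private lemma tele_aux (a b : ℕ → ℝ) (m : ℕ) :
    ∑ i ∈ Finset.range (m + 1), (a (i + 1) - b i)
      = a (m + 1) - b 0 + ∑ j ∈ Finset.Icc 1 m, (a j - b j) := by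
  induction m with
  | zero => simp
  | succ n ih =>
    rw [Finset.sum_range_succ, ih, Finset.sum_Icc_succ_top (by omega : 1 ≤ n + 1)]
    ring

/-- Energy equation with jump dissipation for a piecewise smooth projector: let
`0 = t 0 < t 1 < ⋯ < t m < t (m+1) = T` be a partition, let `P` be a path of
self-adjoint projectors on a real inner product space `H`, and let `u` solve the
dynamical Galerkin scheme on each open subinterval, staying in the range of `P`, with
right-continuity at the nodes and jumps `u (t i) = P(t i⁺) (u(t i⁻))` at interior nodes.
Then `(1/2)(‖u T‖² - ‖u 0‖²) = ∫₀ᵀ ⟪u, f(u)⟫ - (1/2) Σᵢ ‖(1 - P(t i⁺)) u(t i⁻)‖²`. -/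
theorem stmt_9 {H : Type*} [NormedAddCommGroup H] [InnerProductSpace ℝ H]
    (T : ℝ) (hT : 0 < T) (m : ℕ) (t : ℕ → ℝ)
    (ht0 : t 0 = 0) (htT : t (m + 1) = T)
    (hmono : ∀ i ≤ m, t i < t (i + 1))
    (f : H → H) (P P' : ℝ → H →L[ℝ] H)
    (hproj : ∀ s ∈ Set.Icc (0 : ℝ) T, (P s).comp (P s) = P s)
    (hsa : ∀ s ∈ Set.Icc (0 : ℝ) T, ∀ x y : H, ⟪P s x, y⟫ = ⟪x, P s y⟫)
    (u : ℝ → H)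
    -- (a) on each open subinterval, `P` and `u` are differentiable, `u` solves the
    -- dynamical Galerkin scheme and stays in the range of the projector
    (ha : ∀ i ≤ m, ∀ s ∈ Set.Ioo (t i) (t (i + 1)),
      HasDerivAt P (P' s) s ∧
      HasDerivAt u (P s (f (u s)) + P' s (u s)) s ∧
      P s (u s) = u s)
    -- (b) `u` is (right-)continuous at `0` and continuous at `T`
    (hb0 : Tendsto u (𝓝[>] (0 : ℝ)) (𝓝 (u 0)))
    (hbT : Tendsto u (𝓝[<] T) (𝓝 (u T)))
    -- (c) at each interior node the left limit `ulim i = u (t i)⁻` and the right limit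
    -- `Pplus i = P (t i)⁺` exist, `u` is right-continuous there, and
    -- `u (t i) = P (t i)⁺ (u (t i)⁻)`
    (ulim : ℕ → H) (Pplus : ℕ → H →L[ℝ] H)
    (hc : ∀ i, 1 ≤ i → i ≤ m →
      Tendsto u (𝓝[<] (t i)) (𝓝 (ulim i)) ∧
      Tendsto P (𝓝[>] (t i)) (𝓝 (Pplus i)) ∧
      Tendsto u (𝓝[>] (t i)) (𝓝 (u (t i))) ∧
      u (t i) = Pplus i (ulim i))
    -- (d) integrability of `s ↦ ⟪u s, f (u s)⟫`
    (hd : IntervalIntegrable (fun s => ⟪u s, f (u s)⟫) MeasureTheory.volume 0 T) :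
    (1 / 2 : ℝ) * (‖u T‖ ^ 2 - ‖u 0‖ ^ 2) =
      (∫ τ in (0 : ℝ)..T, ⟪u τ, f (u τ)⟫) -
        (1 / 2 : ℝ) * ∑ i ∈ Finset.Icc 1 m, ‖ulim i - Pplus i (ulim i)‖ ^ 2 := by
  -- monotonicity of the partition
  have hle : ∀ ⦃i j : ℕ⦄, i ≤ j → j ≤ m + 1 → t i ≤ t j := by
    intro i j hij hjm
    induction j with
    | zero => exact le_of_eq (by rw [Nat.le_zero.mp hij])
    | succ j ih =>
      rcases Nat.eq_or_lt_of_le hij with h | h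
      · rw [h]
      · exact le_trans (ih (by omega) (by omega)) (hmono j (by omega)).le
  have hIccsub : ∀ i ≤ m, Set.Icc (t i) (t (i + 1)) ⊆ Set.Icc (0 : ℝ) T := by
    intro i hi x hx
    have h0i : (0 : ℝ) ≤ t i := by rw [← ht0]; exact hle (Nat.zero_le i) (by omega)
    have hiT : t (i + 1) ≤ T := by rw [← htT]; exact hle (by omega) le_rfl
    exact ⟨h0i.trans hx.1, hx.2.trans hiT⟩
  -- the energy derivative on each open subinterval
  have hEderiv : ∀ i, i ≤ m → ∀ s ∈ Set.Ioo (t i) (t (i + 1)),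
      HasDerivAt (fun τ => ⟪u τ, u τ⟫) (2 * ⟪u s, f (u s)⟫) s := by
    intro i hi s hs
    obtain ⟨hP, hu, hPu⟩ := ha i hi s hs
    have hsIcc : s ∈ Set.Icc (0 : ℝ) T := hIccsub i hi ⟨hs.1.le, hs.2.le⟩
    have hPP : HasDerivAt (fun τ => (P τ).comp (P τ))
        ((P' s).comp (P s) + (P s).comp (P' s)) s := hP.clm_comp hP
    have heq : P =ᶠ[𝓝 s] (fun τ => (P τ).comp (P τ)) := by
      filter_upwards [Ioo_mem_nhds hs.1 hs.2] with y hy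
      exact (hproj y (hIccsub i hi ⟨hy.1.le, hy.2.le⟩)).symm
    have hP2 : HasDerivAt P ((P' s).comp (P s) + (P s).comp (P' s)) s :=
      hPP.congr_of_eventuallyEq heq
    have hP'id : P' s = (P' s).comp (P s) + (P s).comp (P' s) := hP.unique hP2
    have hz : ⟪u s, P' s (u s)⟫ = 0 := by
      have h2 : ⟪u s, P' s (u s)⟫ = ⟪u s, P' s (u s)⟫ + ⟪u s, P' s (u s)⟫ := by
        conv_lhs => rw [hP'id]
        rw [ContinuousLinearMap.add_apply, ContinuousLinearMap.comp_apply,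
          ContinuousLinearMap.comp_apply, hPu, inner_add_right,
          ← hsa s hsIcc (u s) (P' s (u s)), hPu]
      linarith
    have hinner := hu.inner ℝ hu
    have h2 : ⟪u s, P s (f (u s)) + P' s (u s)⟫ = ⟪u s, f (u s)⟫ := by
      rw [inner_add_right, hz, add_zero, ← hsa s hsIcc (u s) (f (u s)), hPu]
    have h3 : ⟪(P s (f (u s)) + P' s (u s) : H), u s⟫ = ⟪u s, f (u s)⟫ := by
      rw [real_inner_comm]; exact h2
    rw [h2, h3] at hinner
    rw [two_mul]
    exact hinner
  -- integrability on each subinterval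
  have hint : ∀ i < m + 1,
      IntervalIntegrable (fun s => 2 * ⟪u s, f (u s)⟫) MeasureTheory.volume (t i) (t (i + 1)) := by
    intro i hi
    have hsub : Set.uIcc (t i) (t (i + 1)) ⊆ Set.uIcc (0 : ℝ) T := by
      rw [Set.uIcc_of_le (hmono i (by omega)).le, Set.uIcc_of_le hT.le]
      exact hIccsub i (by omega)
    exact (hd.mono_set hsub).const_mul 2
  -- the value at the right end of each subinterval (left limit)
  set w : ℕ → H := fun j => if j ≤ m then ulim j else u T with hw_def
  have key : ∀ i ∈ Finset.range (m + 1), (∫ τ in (t i)..(t (i + 1)), 2 * ⟪u τ, f (u τ)⟫)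
      = ⟪w (i + 1), w (i + 1)⟫ - ⟪u (t i), u (t i)⟫ := by
    intro i hi'
    have hi : i ≤ m := Nat.lt_succ_iff.mp (Finset.mem_range.mp hi')
    have hu_right : Tendsto u (𝓝[>] (t i)) (𝓝 (u (t i))) := by
      rcases Nat.eq_zero_or_pos i with rfl | hpos
      · rw [ht0]; exact hb0
      · exact (hc i hpos hi).2.2.1
    have hu_left : Tendsto u (𝓝[<] (t (i + 1))) (𝓝 (w (i + 1))) := by
      by_cases h : i + 1 ≤ m
      · simp only [hw_def, if_pos h]; exact (hc (i + 1) (by omega) h).1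
      · have him : i = m := by omega
        subst him
        simp only [hw_def, if_neg h]
        rw [htT]; exact hbT
    exact intervalIntegral.integral_eq_sub_of_hasDerivAt_of_tendsto (hmono i hi)
      (fun x hx => hEderiv i hi x hx) (hint i (by omega))
      (hu_right.inner hu_right) (hu_left.inner hu_left)
  -- sum the integrals over the partition
  have hsplit := intervalIntegral.sum_integral_adjacent_intervals
    (f := fun s => 2 * ⟪u s, f (u s)⟫) (μ := MeasureTheory.volume) (a := t) (n := m + 1) hint
  rw [Finset.sum_congr rfl key, tele_aux (fun j => ⟪w j, w j⟫) (fun i => ⟪u (t i), u (t i)⟫) m]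
    at hsplit
  -- the jump terms
  have jump : ∀ j ∈ Finset.Icc 1 m,
      ⟪w j, w j⟫ - ⟪u (t j), u (t j)⟫ = ‖ulim j - Pplus j (ulim j)‖ ^ 2 := by
    intro j hj
    obtain ⟨hj1, hjm⟩ := Finset.mem_Icc.mp hj
    obtain ⟨hul, hPt, hur, hjump⟩ := hc j hj1 hjm
    set Q := Pplus j
    set v := ulim j
    have hev : ∀ᶠ s in 𝓝[>] (t j), s ∈ Set.Icc (0 : ℝ) T := by
      filter_upwards [Ioo_mem_nhdsGT_of_mem (⟨le_refl _, hmono j hjm⟩ :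
        t j ∈ Set.Ico (t j) (t (j + 1)))] with s hs
      exact hIccsub j hjm ⟨hs.1.le, hs.2.le⟩
    have happ : ∀ x : H, Tendsto (fun s => P s x) (𝓝[>] (t j)) (𝓝 (Q x)) := fun x =>
      ((ContinuousLinearMap.apply ℝ H x).continuous.tendsto Q).comp hPt
    have hQQ : ∀ x y : H, ⟪Q x, y⟫ = ⟪x, Q y⟫ := by
      intro x y
      have h1 : Tendsto (fun s => ⟪P s x, y⟫) (𝓝[>] (t j)) (𝓝 ⟪Q x, y⟫) :=
        (happ x).inner tendsto_const_nhds
      have h2 : Tendsto (fun s => ⟪P s x, y⟫) (𝓝[>] (t j)) (𝓝 ⟪x, Q y⟫) := by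
        apply Tendsto.congr' ?_ (tendsto_const_nhds.inner (happ y))
        filter_upwards [hev] with s hs
        exact (hsa s hs x y).symm
      exact tendsto_nhds_unique h1 h2
    have hidem : Q (Q v) = Q v := by
      have hpair : Tendsto (fun s => ((P s : H →L[ℝ] H), P s v)) (𝓝[>] (t j)) (𝓝 (Q, Q v)) :=
        hPt.prodMk_nhds (happ v)
      have h1 : Tendsto (fun s => P s (P s v)) (𝓝[>] (t j)) (𝓝 (Q (Q v))) :=
        (isBoundedBilinearMap_apply.continuous.tendsto (Q, Q v)).comp hpair
      have h2 : Tendsto (fun s => P s (P s v)) (𝓝[>] (t j)) (𝓝 (Q v)) := by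
        apply Tendsto.congr' ?_ (happ v)
        filter_upwards [hev] with s hs
        calc P s v = ((P s).comp (P s)) v := by rw [hproj s hs]
          _ = P s (P s v) := rfl
      exact tendsto_nhds_unique h1 h2
    have hwj : w j = v := if_pos hjm
    rw [hwj, hjump]
    have e1 : ⟪Q v, Q v⟫ = ⟪v, Q v⟫ := by rw [hQQ v (Q v), hidem]
    have expand : ⟪v - Q v, v - Q v⟫ = ⟪v, v⟫ - 2 * ⟪v, Q v⟫ + ⟪Q v, Q v⟫ :=
      real_inner_sub_sub_self v (Q v)
    rw [← real_inner_self_eq_norm_sq]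
    rw [expand]
    linarith
  have hwm : w (m + 1) = u T := by
    simp only [hw_def, if_neg (by omega : ¬ m + 1 ≤ m)]
  rw [Finset.sum_congr rfl jump, hwm, ht0, htT, intervalIntegral.integral_const_mul]
    at hsplit
  rw [real_inner_self_eq_norm_sq, real_inner_self_eq_norm_sq] at hsplit
  linarith
end
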